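/- arXiv:2503.16684 — 2 statements merged into one kernel-verified Lean document; each statement's English description precedes it below -/
import Mathlib

section
/- In the real Euclidean plane, given a triangle ABC and a point D on segment AB with D strictly between A and B, and a point E on segment AC such that line DE is parallel to line BC, then dist(B,D)/dist(D,A) = dist(C,E)/dist(E,A). (Thales' theorem, Elements VI.2, first direction.) -/
open EuclideanGeometry

theorem stmt_3 (A B C D E : EuclideanSpace ℝ (Fin 2))
    (hABC : AffineIndependent ℝ ![A, B, C])
    (hD : Sbtw ℝ A D B) (hE : Sbtw ℝ A E C)
    (hpar : ∃ r : ℝ, D - E = r • (B - C)) :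
    dist B D / dist D A = dist C E / dist E A := by
  obtain ⟨t, ht, hDt⟩ := hD.mem_image_Ioo
  obtain ⟨s, hs, hEs⟩ := hE.mem_image_Ioo
  obtain ⟨r, hr⟩ := hpar
  have hncol : ¬Collinear ℝ ({A, B, C} : Set (EuclideanSpace ℝ (Fin 2))) := by
    rwa [affineIndependent_iff_not_collinear_set] at hABC
  have hDe : D = t • (B - A) + A := by
    rw [← hDt, AffineMap.lineMap_apply]
    simp [vsub_eq_sub, vadd_eq_add]
  have hEe : E = s • (C - A) + A := by
    rw [← hEs, AffineMap.lineMap_apply]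
    simp [vsub_eq_sub, vadd_eq_add]
  have key : (t - r) • (B - A) = (s - r) • (C - A) := by
    have h1 : t • (B - A) - s • (C - A) = r • (B - A) - r • (C - A) := by
      calc t • (B - A) - s • (C - A) = (t • (B - A) + A) - (s • (C - A) + A) := by abel
        _ = r • (B - C) := by rw [← hDe, ← hEe]; exact hr
        _ = r • (B - A) - r • (C - A) := by rw [← smul_sub]; congr 1; abel
    rw [sub_smul, sub_smul]
    linear_combination (norm := module) h1
  have htr : t = r := by
    by_contra h
    apply hncol
    have h' : (t - r) ≠ 0 := sub_ne_zero.mpr h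
    have hBA : B - A = ((s - r) / (t - r)) • (C - A) := by
      rw [div_eq_mul_inv, mul_comm, mul_smul, ← key, smul_smul,
        inv_mul_cancel₀ h', one_smul]
    rw [collinear_iff_exists_forall_eq_smul_vadd]
    refine ⟨A, C - A, fun p hp => ?_⟩
    rcases hp with rfl | rfl | rfl
    · exact ⟨0, by simp⟩
    · exact ⟨(s - r) / (t - r), by rw [← hBA]; simp [vadd_eq_add]⟩
    · exact ⟨1, by simp [vadd_eq_add]⟩
  have hsr : s = r := by
    by_contra h
    apply hncol
    have h' : (s - r) ≠ 0 := sub_ne_zero.mpr h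
    have hCA : C - A = ((t - r) / (s - r)) • (B - A) := by
      rw [div_eq_mul_inv, mul_comm, mul_smul, key, smul_smul,
        inv_mul_cancel₀ h', one_smul]
    rw [collinear_iff_exists_forall_eq_smul_vadd]
    refine ⟨A, B - A, fun p hp => ?_⟩
    rcases hp with rfl | rfl | rfl
    · exact ⟨0, by simp⟩
    · exact ⟨1, by simp [vadd_eq_add]⟩
    · exact ⟨(t - r) / (s - r), by rw [← hCA]; simp [vadd_eq_add]⟩
  have hts : s = t := by rw [htr, hsr]
  subst hts
  rw [← hDt, ← hEs]
  have hAB : dist A B ≠ 0 := dist_ne_zero.mpr hD.left_ne_right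
  have hAC : dist A C ≠ 0 := dist_ne_zero.mpr hE.left_ne_right
  rw [dist_comm B _, dist_comm C _, dist_lineMap_right, dist_lineMap_left,
    dist_lineMap_right, dist_lineMap_left]
  rw [mul_div_mul_right _ _ hAB, mul_div_mul_right _ _ hAC]
end

section
/- Equal triangles on the same base and on the same side are between the same parallels: in ℝ², if triangles ABC and DBC have equal area and A, D lie strictly on the same side of line BC, then line AD is parallel to line BC. (Elements I.39.) -/
/-- The unsigned Euclidean area of the triangle with vertices `P`, `Q`, `R` in `ℝ²`. -/
noncomputable def triArea (P Q R : EuclideanSpace ℝ (Fin 2)) : ℝ :=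
  (1 / 2) * |(Q 0 - P 0) * (R 1 - P 1) - (Q 1 - P 1) * (R 0 - P 0)|

private lemma euc_ext {u v : EuclideanSpace ℝ (Fin 2)} (h0 : u 0 = v 0) (h1 : u 1 = v 1) :
    u = v := by
  apply PiLp.ext; intro i
  fin_cases i <;> assumption

private lemma mem_span_of_det (u v : EuclideanSpace ℝ (Fin 2)) (hv : v ≠ 0)
    (h : u 0 * v 1 = u 1 * v 0) : u ∈ Submodule.span ℝ {v} := by
  have hv' : v 0 ≠ 0 ∨ v 1 ≠ 0 := by
    by_contra hc
    push_neg at hc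
    exact hv (euc_ext hc.1 hc.2)
  rcases hv' with h0 | h1
  · refine Submodule.mem_span_singleton.mpr ⟨u 0 / v 0, ?_⟩
    refine (euc_ext ?_ ?_).symm <;> simp [PiLp.smul_apply, smul_eq_mul] <;> field_simp
    linarith [h]
  · refine Submodule.mem_span_singleton.mpr ⟨u 1 / v 1, ?_⟩
    refine (euc_ext ?_ ?_).symm <;> simp [PiLp.smul_apply, smul_eq_mul] <;> field_simp
    linarith [h]

theorem stmt_11 (A B C D : EuclideanSpace ℝ (Fin 2))
    (hBC : B ≠ C) (hAD : A ≠ D)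
    (hside : (line[ℝ, B, C]).SSameSide A D)
    (harea : triArea A B C = triArea D B C) :
    AffineSubspace.Parallel (line[ℝ, A, D]) (line[ℝ, B, C]) := by
  obtain ⟨⟨p₁, hp₁, p₂, hp₂, hray⟩, hA, hD⟩ := hside
  -- signed area functional
  set f : EuclideanSpace ℝ (Fin 2) → ℝ :=
    fun P => (C 0 - B 0) * (P 1 - B 1) - (C 1 - B 1) * (P 0 - B 0) with hf
  have hCB : (C - B : EuclideanSpace ℝ (Fin 2)) ≠ 0 := sub_ne_zero.mpr (Ne.symm hBC)
  -- points off the line have nonzero f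
  have key : ∀ P : EuclideanSpace ℝ (Fin 2), P ∉ line[ℝ, B, C] → f P ≠ 0 := by
    intro P hP hfP
    apply hP
    have : (P - B : EuclideanSpace ℝ (Fin 2)) ∈ Submodule.span ℝ {(C - B : EuclideanSpace ℝ (Fin 2))} := by
      apply mem_span_of_det _ _ hCB
      simp only [PiLp.sub_apply]
      simp only [hf] at hfP
      nlinarith [hfP]
    obtain ⟨t, ht⟩ := Submodule.mem_span_singleton.mp this
    have : P = t • (C -ᵥ B) +ᵥ B := by
      simp only [vsub_eq_sub, vadd_eq_add]
      rw [ht]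
      abel
    rw [this]
    exact smul_vsub_vadd_mem_affineSpan_pair t B C
  have hfA : f A ≠ 0 := key A hA
  have hfD : f D ≠ 0 := key D hD
  -- f vanishes on the line
  have fline : ∀ P : EuclideanSpace ℝ (Fin 2), P ∈ line[ℝ, B, C] → f P = 0 := by
    intro P hP
    have hmem : (P -ᵥ B : EuclideanSpace ℝ (Fin 2)) ∈ vectorSpan ℝ ({B, C} : Set (EuclideanSpace ℝ (Fin 2))) := by
      rw [← direction_affineSpan]
      exact AffineSubspace.vsub_mem_direction hP (left_mem_affineSpan_pair ℝ B C)
    obtain ⟨t, ht⟩ := mem_vectorSpan_pair.mp hmem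
    have h0 : P 0 - B 0 = t * (B 0 - C 0) := by
      have := congrArg (· 0) ht
      simpa [vsub_eq_sub, PiLp.sub_apply, PiLp.smul_apply] using this.symm
    have h1 : P 1 - B 1 = t * (B 1 - C 1) := by
      have := congrArg (· 1) ht
      simpa [vsub_eq_sub, PiLp.sub_apply, PiLp.smul_apply] using this.symm
    simp only [hf]
    rw [h0, h1]; ring
  -- same ray gives same sign
  have hAp₁ : (A - p₁ : EuclideanSpace ℝ (Fin 2)) ≠ 0 :=
    sub_ne_zero.mpr (fun h => hA (h ▸ hp₁))
  have hDp₂ : (D - p₂ : EuclideanSpace ℝ (Fin 2)) ≠ 0 :=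
    sub_ne_zero.mpr (fun h => hD (h ▸ hp₂))
  simp only [vsub_eq_sub] at hray
  obtain ⟨r₁, r₂, hr₁, hr₂, hsc⟩ := hray.exists_pos hAp₁ hDp₂
  -- apply the linear functional g v = (C0-B0) v1 - (C1-B1) v0 to hsc
  have g0 := congrArg (· 0) hsc
  have g1 := congrArg (· 1) hsc
  simp only [PiLp.smul_apply, PiLp.sub_apply, smul_eq_mul] at g0 g1
  have hfp₁ : f p₁ = 0 := fline p₁ hp₁
  have hfp₂ : f p₂ = 0 := fline p₂ hp₂
  have hsign : r₁ * f A = r₂ * f D := by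
    simp only [hf] at hfp₁ hfp₂ ⊢
    linear_combination (C 0 - B 0) * g1 - (C 1 - B 1) * g0 + r₁ * hfp₁ - r₂ * hfp₂
  -- equal unsigned areas
  have habs : |f A| = |f D| := by
    unfold triArea at harea
    simp only [hf]
    have h1 : |(B 0 - A 0) * (C 1 - A 1) - (B 1 - A 1) * (C 0 - A 0)| =
        |(B 0 - D 0) * (C 1 - D 1) - (B 1 - D 1) * (C 0 - D 0)| := by linarith
    have e1 : (C 0 - B 0) * (A 1 - B 1) - (C 1 - B 1) * (A 0 - B 0) =
        (B 0 - A 0) * (C 1 - A 1) - (B 1 - A 1) * (C 0 - A 0) := by ring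
    have e2 : (C 0 - B 0) * (D 1 - B 1) - (C 1 - B 1) * (D 0 - B 0) =
        (B 0 - D 0) * (C 1 - D 1) - (B 1 - D 1) * (C 0 - D 0) := by ring
    rw [e1, e2, h1]
  have hfAD : f A = f D := by
    rcases abs_eq_abs.mp habs with h | h
    · exact h
    · exfalso
      rw [h] at hsign
      have : (r₁ + r₂) * f D = 0 := by linarith
      rcases mul_eq_zero.mp this with h' | h'
      · linarith
      · exact hfD h'
  -- D - A is in span of C - B
  have hmem : (D - A : EuclideanSpace ℝ (Fin 2)) ∈ Submodule.span ℝ {(C - B : EuclideanSpace ℝ (Fin 2))} := by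
    apply mem_span_of_det _ _ hCB
    simp only [PiLp.sub_apply]
    simp only [hf] at hfAD
    nlinarith [hfAD]
  obtain ⟨c, hc⟩ := Submodule.mem_span_singleton.mp hmem
  have hc0 : c ≠ 0 := by
    rintro rfl
    rw [zero_smul] at hc
    exact (sub_ne_zero.mpr (Ne.symm hAD)) hc.symm
  rw [AffineSubspace.affineSpan_pair_parallel_iff_vectorSpan_eq]
  rw [vectorSpan_pair, vectorSpan_pair_rev]
  have e1 : (A -ᵥ D : EuclideanSpace ℝ (Fin 2)) = (-c) • (C -ᵥ B) := by
    simp only [vsub_eq_sub]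
    rw [neg_smul, hc, neg_sub]
  rw [e1, Submodule.span_singleton_smul_eq (IsUnit.mk0 _ (neg_ne_zero.mpr hc0))]
end
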